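/- Let C ⊆ F_q^I, let (J, J̄) partition I with dim(C|_J) + dim(C|_{J̄}) − dim(C) = r, and let C₁ (on I₁ = J ∪ I_Δ) and C₂ (on I₂ = J̄ ∪ I_Δ) be the codes produced by the generator-matrix r-sum decomposition construction. Then for every J₁ ⊆ J: dim(C₁|_{J₁}) + dim(C₁|_{I₁∖J₁}) − dim(C₁) = dim(C|_{J₁}) + dim(C|_{I∖J₁}) − dim(C). -/

import Mathlib

/-!
Both generator matrices are systematic on `J`, so `C₁` and `C` have the same restriction to
`J₁ ⊆ J`, and `dim C₁ = k₁`, `dim C = k₁ + k₂'`. The dimension of a restriction of a row space is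
the number of rows minus the dimension of the space of row relations `c` (`∑ cᵢ rowᵢ = 0`).
The last `k₂'` rows of `C` carry an identity block on `J̄`, so they add exactly `k₂'` both to
`dim C` and to `dim C|_{I∖J₁}`. For the first `k₁` rows, a relation on `I₁∖J₁` must kill the
`J₁ᶜ`-part of `[I A]` and `cX = (cα)D`, while a relation on `I∖J₁` must kill the same part and
`cB = (cα)B_top`; since `D` and `B_top` have independent rows, both conditions read `cα = 0`.
-/

open Module

/-- Projection of a code along a coordinate-selection map `g : T → ι`. -/
noncomputable def projAlong {F : Type*} [Field F] {ι T : Type*}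
    (C : Submodule F (ι → F)) (g : T → ι) : Submodule F (T → F) :=
  C.map (LinearMap.funLeft F F g)

section

variable {F : Type*} [Field F]
  {k₁ k₂' a b m r : ℕ}

/-- The rows of the generator matrix `Ḡ = [[I, A, 0, B], [0, 0, I, C']]` of `C`;
the columns indexed by `J` are `Fin k₁ ⊕ Fin a`, those indexed by `J̄` are
`Fin k₂' ⊕ Fin b`. -/
noncomputable def rowsG (A : Fin k₁ → Fin a → F) (B : Fin k₁ → Fin b → F)
    (C' : Fin k₂' → Fin b → F) :
    Fin k₁ ⊕ Fin k₂' → ((Fin k₁ ⊕ Fin a) ⊕ (Fin k₂' ⊕ Fin b)) → F :=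
  Sum.elim
    (fun i => Sum.elim (Sum.elim (fun i' => if i = i' then 1 else 0) (A i))
      (Sum.elim (fun _ => 0) (B i)))
    (fun i => Sum.elim (fun _ => 0)
      (Sum.elim (fun i' => if i = i' then 1 else 0) (C' i)))

/-- The rows of the generator matrix `G₁ = [I, A, X]` of `C₁`, on the column index set
`J ∪ I_Δ = (Fin k₁ ⊕ Fin a) ⊕ Fin m`; here `X i k = ∑ j, α i j * D j k`. -/
noncomputable def rowsG1 (A : Fin k₁ → Fin a → F) (D : Fin r → Fin m → F)
    (α : Fin k₁ → Fin r → F) :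
    Fin k₁ → ((Fin k₁ ⊕ Fin a) ⊕ Fin m) → F :=
  fun i => Sum.elim (Sum.elim (fun i' => if i = i' then 1 else 0) (A i))
    (fun k => ∑ j, α i j * D j k)

/-- The rows of the generator matrix `G₂ = [[X, 0, B], [0, I, C']]` of `C₂`, on the column
index set `I_Δ ∪ J̄ = Fin m ⊕ (Fin k₂' ⊕ Fin b)`. -/
noncomputable def rowsG2 (B : Fin k₁ → Fin b → F) (C' : Fin k₂' → Fin b → F)
    (D : Fin r → Fin m → F) (α : Fin k₁ → Fin r → F) :
    Fin k₁ ⊕ Fin k₂' → (Fin m ⊕ (Fin k₂' ⊕ Fin b)) → F :=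
  Sum.elim
    (fun i => Sum.elim (fun k => ∑ j, α i j * D j k) (Sum.elim (fun _ => 0) (B i)))
    (fun i => Sum.elim (fun _ => 0)
      (Sum.elim (fun i' => if i = i' then 1 else 0) (C' i)))

variable {ι ι' ρ κ κ' T M N : Type*}

theorem projAlong_span_range (v : ι → κ → F) (g : T → κ) :
    projAlong (Submodule.span F (Set.range v)) g =
      Submodule.span F (Set.range fun i => v i ∘ g) := by
  rw [projAlong, Submodule.map_span, ← Set.range_comp]
  rfl

theorem span_range_sumElim_zero [AddCommGroup M] [Module F M] (v : ι → M) :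
    Submodule.span F (Set.range (Sum.elim v (0 : ι' → M))) =
      Submodule.span F (Set.range v) := by
  refine le_antisymm (Submodule.span_le.mpr ?_) (Submodule.span_mono ?_)
  · rintro _ ⟨i | i, rfl⟩
    · exact Submodule.subset_span ⟨i, rfl⟩
    · exact Submodule.zero_mem _
  · rintro _ ⟨i, rfl⟩
    exact ⟨Sum.inl i, rfl⟩

theorem linearIndependent_of_identity_columns [DecidableEq ι] (v : ι → κ → F) (e : ι → κ)
    (he : ∀ i j, v i (e j) = if i = j then 1 else 0) : LinearIndependent F v := by
  refine LinearIndependent.of_comp (LinearMap.funLeft F F e) ?_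
  convert Pi.linearIndependent_single_one ι F with i
  funext j
  simp [LinearMap.funLeft_apply, he, Pi.single_apply, eq_comm]

theorem finrank_span_range_sumElim_of_identity_columns [Finite ι] [Fintype ι'] [DecidableEq ι']
    (v : ι → κ → F) (w : ι' → κ → F) (e : ι' → κ) (hv : ∀ i j, v i (e j) = 0)
    (hw : ∀ i j, w i (e j) = if i = j then 1 else 0) :
    finrank F (Submodule.span F (Set.range (Sum.elim v w))) =
      finrank F (Submodule.span F (Set.range v)) + Fintype.card ι' := by
  have hv_le : Submodule.span F (Set.range v) ≤ LinearMap.ker (LinearMap.funLeft F F e) :=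
    Submodule.span_le.mpr fun _ ⟨i, hi⟩ => hi ▸ funext (hv i)
  have hw_read : ∀ c : ι' → F, (∑ i, c i • w i) ∘ e = c := by
    intro c
    funext j
    simp [Finset.sum_apply, hw]
  have hdisj : Submodule.span F (Set.range v) ⊓ Submodule.span F (Set.range w) = ⊥ := by
    refine (Submodule.eq_bot_iff _).mpr fun x ⟨hxv, hxw⟩ => ?_
    obtain ⟨c, rfl⟩ := (Submodule.mem_span_range_iff_exists_fun F).mp hxw
    have hc : c = 0 := (hw_read c).symm.trans (hv_le hxv)
    simp [hc]
  have := FiniteDimensional.span_of_finite F (Set.finite_range v)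
  have := FiniteDimensional.span_of_finite F (Set.finite_range w)
  have hsup := Submodule.finrank_sup_add_finrank_inf_eq
    (Submodule.span F (Set.range v)) (Submodule.span F (Set.range w))
  rw [hdisj, finrank_bot, add_zero,
    finrank_span_eq_card (linearIndependent_of_identity_columns w e hw)] at hsup
  rw [Set.Sum.elim_range, Submodule.span_union, hsup]

theorem ker_linearCombination_sumElim [Fintype ι] (u : ι → κ → F) (w : ι → κ' → F) :
    LinearMap.ker (Fintype.linearCombination F fun i => Sum.elim (u i) (w i)) =
      LinearMap.ker (Fintype.linearCombination F u) ⊓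
        LinearMap.ker (Fintype.linearCombination F w) := by
  ext c
  simp [Fintype.linearCombination_apply, funext_iff, Finset.sum_apply]

theorem ker_linearCombination_mul [Fintype ι] [Fintype ρ] (α : ι → ρ → F) (P : ρ → κ → F)
    (hP : LinearIndependent F P) :
    LinearMap.ker (Fintype.linearCombination F fun i k => ∑ j, α i j * P j k) =
      LinearMap.ker (Fintype.linearCombination F α) := by
  have hcomp : Fintype.linearCombination F (fun i k => ∑ j, α i j * P j k) =
      Fintype.linearCombination F P ∘ₗ Fintype.linearCombination F α := by
    ext c k
    simp only [LinearMap.comp_apply, Fintype.linearCombination_apply, Finset.sum_apply,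
      Pi.smul_apply, smul_eq_mul, Finset.mul_sum, Finset.sum_mul, mul_assoc]
    exact Finset.sum_comm
  rw [hcomp, LinearMap.ker_comp_of_ker_eq_bot _
    (LinearMap.ker_eq_bot.mpr hP.fintypeLinearCombination_injective)]

theorem finrank_span_range_eq_of_ker_eq [Fintype ι] [AddCommGroup M] [Module F M]
    [AddCommGroup N] [Module F N] (v : ι → M) (w : ι → N)
    (h : LinearMap.ker (Fintype.linearCombination F v) =
      LinearMap.ker (Fintype.linearCombination F w)) :
    finrank F (Submodule.span F (Set.range v)) = finrank F (Submodule.span F (Set.range w)) := by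
  rw [← Fintype.range_linearCombination, ← Fintype.range_linearCombination,
    ← (LinearMap.quotKerEquivRange _).finrank_eq, ← (LinearMap.quotKerEquivRange _).finrank_eq, h]

theorem projAlong_rowsG1_inl_eq (A : Fin k₁ → Fin a → F) (B : Fin k₁ → Fin b → F)
    (C' : Fin k₂' → Fin b → F) (D : Fin r → Fin m → F) (α : Fin k₁ → Fin r → F)
    (g : T → Fin k₁ ⊕ Fin a) :
    projAlong (Submodule.span F (Set.range (rowsG1 A D α))) (Sum.inl ∘ g) =
      projAlong (Submodule.span F (Set.range (rowsG A B C'))) (Sum.inl ∘ g) := by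
  rw [projAlong_span_range, projAlong_span_range, ← span_range_sumElim_zero (ι' := Fin k₂')]
  congr
  funext i t
  rcases i with i | i <;> rfl

theorem finrank_span_rowsG1 (A : Fin k₁ → Fin a → F) (D : Fin r → Fin m → F)
    (α : Fin k₁ → Fin r → F) :
    finrank F (Submodule.span F (Set.range (rowsG1 A D α))) = k₁ := by
  rw [finrank_span_eq_card (linearIndependent_of_identity_columns _ (Sum.inl ∘ Sum.inl)
    fun _ _ => rfl), Fintype.card_fin]

theorem finrank_span_rowsG (A : Fin k₁ → Fin a → F) (B : Fin k₁ → Fin b → F)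
    (C' : Fin k₂' → Fin b → F) :
    finrank F (Submodule.span F (Set.range (rowsG A B C'))) = k₁ + k₂' := by
  rw [← Sum.elim_comp_inl_inr (rowsG A B C'), finrank_span_range_sumElim_of_identity_columns
    _ _ (Sum.inr ∘ Sum.inl) (fun _ _ => rfl) (fun _ _ => rfl),
    finrank_span_eq_card (linearIndependent_of_identity_columns _ (Sum.inl ∘ Sum.inl)
    fun _ _ => rfl), Fintype.card_fin, Fintype.card_fin]

theorem finrank_projAlong_rowsG_sumElim (A : Fin k₁ → Fin a → F)
    (B : Fin k₁ → Fin b → F) (C' : Fin k₂' → Fin b → F) (D : Fin r → Fin m → F)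
    (α : Fin k₁ → Fin r → F) (Btop : Fin r → Fin b → F) (hD : LinearIndependent F D)
    (hBtop : LinearIndependent F Btop) (hα : ∀ i c, B i c = ∑ j, α i j * Btop j c)
    (g : T → Fin k₁ ⊕ Fin a) :
    finrank F (projAlong (Submodule.span F (Set.range (rowsG A B C')))
        (Sum.elim (Sum.inl ∘ g) Sum.inr)) =
      finrank F (projAlong (Submodule.span F (Set.range (rowsG1 A D α)))
        (Sum.elim (Sum.inl ∘ g) Sum.inr)) + k₂' := by
  set U : Fin k₁ → T → F := fun i t => rowsG1 A D α i (Sum.inl (g t))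
  have hrowsG : (fun i => rowsG A B C' (Sum.inl i) ∘ Sum.elim (Sum.inl ∘ g) Sum.inr) =
      fun i => Sum.elim (U i) (Sum.elim 0 (B i)) := by
    funext i s
    rcases s with t | j | j <;> rfl
  have hrowsG1 : (fun i => rowsG1 A D α i ∘ Sum.elim (Sum.inl ∘ g) Sum.inr) =
      fun i => Sum.elim (U i) fun k => ∑ j, α i j * D j k := by
    funext i s
    rcases s with t | k <;> rfl
  have hkerB : LinearMap.ker (Fintype.linearCombination F B) =
      LinearMap.ker (Fintype.linearCombination F α) := by
    rw [show B = fun i c => ∑ j, α i j * Btop j c from funext₂ hα]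
    exact ker_linearCombination_mul α Btop hBtop
  have hker0 : LinearMap.ker (Fintype.linearCombination F fun _ : Fin k₁ => (0 : Fin k₂' → F)) =
      ⊤ := LinearMap.ker_eq_top.mpr (by ext; simp [Fintype.linearCombination_apply])
  rw [projAlong_span_range, projAlong_span_range, ← Sum.elim_comp_inl_inr (fun i => _ ∘ _),
    finrank_span_range_sumElim_of_identity_columns _ _ (Sum.inr ∘ Sum.inl)
      (fun _ _ => rfl) (fun _ _ => rfl), Fintype.card_fin]
  congr 1
  apply finrank_span_range_eq_of_ker_eq
  rw [Function.comp_def, hrowsG, hrowsG1, ker_linearCombination_sumElim,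
    ker_linearCombination_sumElim, ker_linearCombination_sumElim, hker0, top_inf_eq, hkerB,
    ker_linearCombination_mul α D hD]

theorem decomposition_preserves_state_dims_general
    (hr : r ≤ k₁)
    (A : Fin k₁ → Fin a → F) (B : Fin k₁ → Fin b → F) (C' : Fin k₂' → Fin b → F)
    (D : Fin r → Fin m → F) (α : Fin k₁ → Fin r → F)
    (hDrows : LinearIndependent F D)
    (hBtop : LinearIndependent F (fun j : Fin r => B (Fin.castLE hr j)))
    (hα : ∀ i c, B i c = ∑ j : Fin r, α i j * B (Fin.castLE hr j) c)
    (J₁ : Set (Fin k₁ ⊕ Fin a)) :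
    finrank F ↥(projAlong (Submodule.span F (Set.range (rowsG1 A D α)))
          ((Sum.inl ∘ Subtype.val : ↥J₁ → (Fin k₁ ⊕ Fin a) ⊕ Fin m))) +
      finrank F ↥(projAlong (Submodule.span F (Set.range (rowsG1 A D α)))
          (Sum.elim (Sum.inl ∘ Subtype.val) Sum.inr :
            ↥J₁ᶜ ⊕ Fin m → (Fin k₁ ⊕ Fin a) ⊕ Fin m)) +
      finrank F ↥(Submodule.span F (Set.range (rowsG A B C'))) =
    finrank F ↥(projAlong (Submodule.span F (Set.range (rowsG A B C')))
          ((Sum.inl ∘ Subtype.val : ↥J₁ → (Fin k₁ ⊕ Fin a) ⊕ (Fin k₂' ⊕ Fin b)))) +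
      finrank F ↥(projAlong (Submodule.span F (Set.range (rowsG A B C')))
          (Sum.elim (Sum.inl ∘ Subtype.val) Sum.inr :
            ↥J₁ᶜ ⊕ (Fin k₂' ⊕ Fin b) → (Fin k₁ ⊕ Fin a) ⊕ (Fin k₂' ⊕ Fin b))) +
      finrank F ↥(Submodule.span F (Set.range (rowsG1 A D α))) := by
  rw [projAlong_rowsG1_inl_eq A B C' D α Subtype.val, finrank_span_rowsG1, finrank_span_rowsG,
    finrank_projAlong_rowsG_sumElim A B C' D α _ hDrows hBtop hα]
  omega

/-- with `C`, `C₁`, `C₂` as produced by the generator-matrix `r`-sum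
decomposition construction, for every `J₁ ⊆ J`:
`dim C₁|_{J₁} + dim C₁|_{I₁∖J₁} − dim C₁ = dim C|_{J₁} + dim C|_{I∖J₁} − dim C`
(stated in the equivalent subtraction-free form). -/
theorem decomposition_preserves_state_dims [Fintype F]
    (hr : r ≤ k₁) (hr1 : 1 ≤ r)
    (hm : m = (Fintype.card F ^ r - 1) / (Fintype.card F - 1))
    (A : Fin k₁ → Fin a → F) (B : Fin k₁ → Fin b → F) (C' : Fin k₂' → Fin b → F)
    (D : Fin r → Fin m → F) (α : Fin k₁ → Fin r → F)
    (hDrows : LinearIndependent F D)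
    (hDcols : ∀ k₁' k₂'', k₁' ≠ k₂'' →
      LinearIndependent F ![fun i => D i k₁', fun i => D i k₂''])
    (hBtop : LinearIndependent F (fun j : Fin r => B (Fin.castLE hr j)))
    (hα : ∀ i c, B i c = ∑ j : Fin r, α i j * B (Fin.castLE hr j) c)
    (J₁ : Set (Fin k₁ ⊕ Fin a)) :
    finrank F ↥(projAlong (Submodule.span F (Set.range (rowsG1 A D α)))
          ((Sum.inl ∘ Subtype.val : ↥J₁ → (Fin k₁ ⊕ Fin a) ⊕ Fin m))) +
      finrank F ↥(projAlong (Submodule.span F (Set.range (rowsG1 A D α)))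
          (Sum.elim (Sum.inl ∘ Subtype.val) Sum.inr :
            ↥J₁ᶜ ⊕ Fin m → (Fin k₁ ⊕ Fin a) ⊕ Fin m)) +
      finrank F ↥(Submodule.span F (Set.range (rowsG A B C'))) =
    finrank F ↥(projAlong (Submodule.span F (Set.range (rowsG A B C')))
          ((Sum.inl ∘ Subtype.val : ↥J₁ → (Fin k₁ ⊕ Fin a) ⊕ (Fin k₂' ⊕ Fin b)))) +
      finrank F ↥(projAlong (Submodule.span F (Set.range (rowsG A B C')))
          (Sum.elim (Sum.inl ∘ Subtype.val) Sum.inr :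
            ↥J₁ᶜ ⊕ (Fin k₂' ⊕ Fin b) → (Fin k₁ ⊕ Fin a) ⊕ (Fin k₂' ⊕ Fin b))) +
      finrank F ↥(Submodule.span F (Set.range (rowsG1 A D α))) :=
  decomposition_preserves_state_dims_general hr A B C' D α hDrows hBtop hα J₁

end
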